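/- Correctness of the flag construction for Φ_o = G_{[0,T_o]} G_{[0,T_in]} φ: with the flag f for the inner formula G_{[0,T_in]}φ, define Sat(t) = 1 if f(t) = T_in + 1 and Sat(t) = 0 otherwise, and define fin recursively by fin(T_in + 1) = Sat(T_in + 1) and fin(t+1) = min(Sat(t+1), fin(t)) for t ≥ T_in + 1. Then fin(T_o + T_in + 1) = 1 if and only if φ(s(u)) holds for every integer u ∈ {0,…,T_o + T_in}, i.e., if and only if the discrete-time signal s satisfies G_{[0,T_o]} G_{[0,T_in]} φ at time 0. -/
import Mathlib


/-- Flag for the inner formula G_{[0,T_in]}φ: f(0) = 0, f(t+1) = min(f(t), T_in) + 1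
if φ(s(t)), and f(t+1) = 0 otherwise. -/
def flagG {S : Type*} (s : ℕ → S) (φ : S → Prop) [DecidablePred φ] (Tin : ℕ) : ℕ → ℕ
  | 0 => 0
  | (t + 1) => if φ (s t) then min (flagG s φ Tin t) Tin + 1 else 0

lemma flagG_ge {S : Type*} (s : ℕ → S) (φ : S → Prop) [DecidablePred φ] (Tin : ℕ) :
    ∀ t k, k ≤ Tin + 1 → (k ≤ flagG s φ Tin t ↔ k ≤ t ∧ ∀ u < t, t ≤ u + k → φ (s u)) := by
  intro t
  induction t with
  | zero =>
    intro k hk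
    simp only [flagG]
    exact ⟨fun h => ⟨h, fun u hu => (Nat.not_lt_zero u hu).elim⟩, fun h => h.1⟩
  | succ t ih =>
    intro k hk
    match k with
    | 0 =>
      simp only [Nat.zero_le, true_iff, true_and]
      intro u h1 h2
      exact absurd h2 (by omega)
    | m + 1 =>
      simp only [flagG]
      by_cases hφ : φ (s t)
      · rw [if_pos hφ]
        have hm : m ≤ Tin + 1 := by omega
        have hiff : m + 1 ≤ min (flagG s φ Tin t) Tin + 1 ↔ m ≤ flagG s φ Tin t := by
          constructor
          · intro h; omega
          · intro h; omega
        rw [hiff, ih m hm]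
        constructor
        · rintro ⟨h1, h2⟩
          refine ⟨by omega, ?_⟩
          intro u hu hle
          rcases Nat.lt_succ_iff_lt_or_eq.mp hu with h | h
          · exact h2 u h (by omega)
          · subst h; exact hφ
        · rintro ⟨h1, h2⟩
          exact ⟨by omega, fun u hu hle => h2 u (by omega) (by omega)⟩
      · rw [if_neg hφ]
        constructor
        · intro h; omega
        · rintro ⟨h1, h2⟩
          exact absurd (h2 t (by omega) (by omega)) hφ

lemma flagG_le {S : Type*} (s : ℕ → S) (φ : S → Prop) [DecidablePred φ] (Tin : ℕ) :
    ∀ t, flagG s φ Tin t ≤ Tin + 1 := by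
  intro t
  cases t with
  | zero => simp [flagG]
  | succ t => simp only [flagG]; split <;> omega

lemma flagG_eq {S : Type*} (s : ℕ → S) (φ : S → Prop) [DecidablePred φ] (Tin t : ℕ) :
    flagG s φ Tin t = Tin + 1 ↔ Tin + 1 ≤ t ∧ ∀ u < t, t ≤ u + (Tin + 1) → φ (s u) := by
  have h := flagG_ge s φ Tin t (Tin + 1) le_rfl
  have h2 := flagG_le s φ Tin t
  constructor
  · intro he; exact h.mp (by omega)
  · intro hr; have := h.mpr hr; omega

/-- Correctness of the flag construction for Φ_o = G_{[0,T_o]} G_{[0,T_in]} φ. -/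
theorem stmt19 {S : Type*} (s : ℕ → S) (φ : S → Prop) [DecidablePred φ] (To Tin : ℕ)
    (Sat : ℕ → ℕ) (hSat : ∀ t : ℕ, Sat t = if flagG s φ Tin t = Tin + 1 then 1 else 0)
    (fin : ℕ → ℕ) (hfin0 : fin (Tin + 1) = Sat (Tin + 1))
    (hfin : ∀ t : ℕ, Tin + 1 ≤ t → fin (t + 1) = min (Sat (t + 1)) (fin t)) :
    fin (To + Tin + 1) = 1 ↔ ∀ u ≤ To + Tin, φ (s u) := by
  have hSat01 : ∀ t, Sat t = 0 ∨ Sat t = 1 := by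
    intro t; rw [hSat]; split <;> simp
  have hSat1 : ∀ j : ℕ, Sat (Tin + 1 + j) = 1 ↔ ∀ u, j ≤ u → u ≤ Tin + j → φ (s u) := by
    intro j
    rw [hSat]
    constructor
    · intro h1 u hu1 hu2
      split_ifs at h1 with h
      exact ((flagG_eq s φ Tin _).mp h).2 u (by omega) (by omega)
    · intro h
      rw [if_pos ((flagG_eq s φ Tin _).mpr
        ⟨by omega, fun u hu hle => h u (by omega) (by omega)⟩)]
  have hfin_le : ∀ k : ℕ, fin (Tin + 1 + k) ≤ 1 := by
    intro k
    induction k with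
    | zero =>
      have := hSat01 (Tin + 1)
      simpa [hfin0] using by omega
    | succ k ih =>
      have hrec := hfin (Tin + 1 + k) (by omega)
      have he : Tin + 1 + k + 1 = Tin + 1 + (k + 1) := by omega
      rw [he] at hrec
      rw [hrec]
      exact le_trans (Nat.min_le_right _ _) ih
  have key : ∀ k : ℕ, fin (Tin + 1 + k) = 1 ↔ ∀ j ≤ k, Sat (Tin + 1 + j) = 1 := by
    intro k
    induction k with
    | zero =>
      simp only [Nat.add_zero, hfin0]
      constructor
      · intro h j hj; interval_cases j; simpa using h
      · intro h; simpa using h 0 le_rfl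
    | succ k ih =>
      have hrec := hfin (Tin + 1 + k) (by omega)
      have he : Tin + 1 + k + 1 = Tin + 1 + (k + 1) := by omega
      rw [he] at hrec
      rw [hrec]
      have hl := Nat.min_le_left (Sat (Tin + 1 + (k + 1))) (fin (Tin + 1 + k))
      have hr := Nat.min_le_right (Sat (Tin + 1 + (k + 1))) (fin (Tin + 1 + k))
      have hle := hfin_le k
      have hs01 := hSat01 (Tin + 1 + (k + 1))
      constructor
      · intro h j hj
        have hfin1 : fin (Tin + 1 + k) = 1 := by omega
        have hs1 : Sat (Tin + 1 + (k + 1)) = 1 := by omega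
        rcases Nat.lt_succ_iff_lt_or_eq.mp (Nat.lt_succ_of_le hj) with h' | h'
        · exact (ih.mp hfin1) j (by omega)
        · subst h'; exact hs1
      · intro h
        have h1 : Sat (Tin + 1 + (k + 1)) = 1 := h (k + 1) le_rfl
        have h2 : fin (Tin + 1 + k) = 1 := ih.mpr fun j hj => h j (by omega)
        rw [h1, h2]; simp
  have heq : To + Tin + 1 = Tin + 1 + To := by omega
  rw [heq, key]
  constructor
  · intro h u hu
    by_cases hc : u ≤ To
    · exact ((hSat1 u).mp (h u hc)) u le_rfl (by omega)
    · exact ((hSat1 To).mp (h To le_rfl)) u (by omega) (by omega)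
  · intro h j hj
    exact (hSat1 j).mpr fun u hu1 hu2 => h u (by omega)
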